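/- arXiv:0909.2120 — 2 statements merged into one kernel-verified Lean document; each statement's English description precedes it below -/
import Mathlib

section
/- Let d ≥ 2, x ∈ [0,1], and let (X^N)_N be an approximate x-maximizer for the neural complexity. Let y ∈ (0,1) and set k_N := ⌊yN⌋. For every ε > 0 there is N_0 such that for all N ≥ N_0 the following holds, with at most ε·C(N,k_N) exceptional subsets S ⊆ {1,…,N} of cardinality k_N: (i) if y ≤ x, then 1 − ε ≤ H(X^N_S)/(|S| log d) ≤ 1; (ii) if y ≥ x, then 0 ≤ H(X^N | X^N_S)/(N log d) ≤ ε. -/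
open Filter

noncomputable def entropy {α : Type*} [Fintype α] (p : α → ℝ) : ℝ :=
  -∑ x, p x * Real.log (p x)

def IsPMF {α : Type*} [Fintype α] (p : α → ℝ) : Prop :=
  (∀ x, 0 ≤ p x) ∧ ∑ x, p x = 1

noncomputable def margin {d N : ℕ} (μ : (Fin N → Fin d) → ℝ) (S : Finset (Fin N)) :
    (({ i // i ∈ S }) → Fin d) → ℝ :=
  fun y => ∑ x : Fin N → Fin d, if ∀ i : { i // i ∈ S }, x i.1 = y i then μ x else 0

/-- Mutual information between `X_S` and `X_{Sᶜ}`. -/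
noncomputable def MIS {d N : ℕ} (μ : (Fin N → Fin d) → ℝ) (S : Finset (Fin N)) : ℝ :=
  entropy (margin μ S) + entropy (margin μ Sᶜ) - entropy μ

/-- The Edelman–Sporns–Tononi neural complexity. -/
noncomputable def neural {d N : ℕ} (μ : (Fin N → Fin d) → ℝ) : ℝ :=
  (1 / (N + 1 : ℝ)) * ∑ S : Finset (Fin N), (1 / (N.choose S.card : ℝ)) * MIS μ S

noncomputable def avgEntropy {d N : ℕ} (μ : (Fin N → Fin d) → ℝ) (k : ℕ) : ℝ :=
  (1 / (N.choose k : ℝ)) *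
    ∑ S ∈ Finset.powersetCard k (Finset.univ : Finset (Fin N)), entropy (margin μ S)

/-- The entropy profile `h_X : [0,1] → [0,1]`, piecewise affine interpolation of
`k/N ↦ (average entropy of subsystems of size k)/(N log d)`. -/
noncomputable def profile {d N : ℕ} (μ : (Fin N → Fin d) → ℝ) (t : ℝ) : ℝ :=
  if t ≤ 0 then 0 else
    (avgEntropy μ (⌈t * N⌉.toNat - 1)
      + (t * N - ((⌈t * N⌉.toNat - 1 : ℕ) : ℝ)) *
        (avgEntropy μ ⌈t * N⌉.toNat - avgEntropy μ (⌈t * N⌉.toNat - 1)))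
      / (N * Real.log d)

open scoped Classical

/-!
Write `λ = log d` and `A_k` for the average entropy of the `k`-element subsystems. Then
`A_k ≤ min (k λ) H(X)` and `A_{k+1} ≤ A_k + λ`, while the neural complexity is an affine function
of `∑ₖ A_k`. For an approximate `x`-maximizer this forces `∑ₖ A_k` to be as large as the bound
`∑ₖ min (k λ) H(X)` permits up to `o(N² λ)`, i.e. the total deficit
`∑ₖ (min (k λ) H(X) - A_k)` is `o(N² λ)`. The deficit drops by at most `λ` per step, so a deficit
of order `N λ` at `k = ⌊y N⌋` would persist on a window of length of order `N`; hence it is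
`o(N λ)`. Markov's inequality over the subsets of size `⌊y N⌋` turns this bound on the average
into the bound on the number of exceptional subsets.
-/

open Finset Real Topology

noncomputable def pushforward {α β : Type*} [Fintype α] (f : α → β) (p : α → ℝ) : β → ℝ :=
  fun y => ∑ x, if f x = y then p x else 0

section Pushforward

variable {α β γ : Type*} [Fintype α]

lemma pushforward_nonneg (f : α → β) {p : α → ℝ} (hp : ∀ x, 0 ≤ p x) (y : β) :
    0 ≤ pushforward f p y :=
  sum_nonneg fun x _ => by split_ifs <;> simp [hp x]

lemma sum_pushforward_mul [Fintype β] (f : α → β) (p : α → ℝ) (g : β → ℝ) :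
    ∑ y, pushforward f p y * g y = ∑ x, p x * g (f x) := by
  simp only [pushforward, sum_mul, ite_mul, zero_mul]
  rw [sum_comm]
  simp

lemma sum_pushforward [Fintype β] (f : α → β) (p : α → ℝ) : ∑ y, pushforward f p y = ∑ x, p x := by
  simpa using sum_pushforward_mul f p 1

lemma le_pushforward_apply (f : α → β) {p : α → ℝ} (hp : ∀ x, 0 ≤ p x) (x : α) :
    p x ≤ pushforward f p (f x) := by
  unfold pushforward
  simpa using single_le_sum (f := fun x' => if f x' = f x then p x' else 0)
    (fun x' _ => by split_ifs <;> simp [hp x']) (mem_univ x)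

lemma pushforward_comp [Fintype β] (f : α → β) (g : β → γ) (p : α → ℝ) :
    pushforward g (pushforward f p) = pushforward (g ∘ f) p := by
  funext z
  simp only [pushforward, ← sum_filter, Function.comp_apply]
  rw [← sum_fiberwise_of_maps_to (g := f) (t := univ.filter (g · = z))]
  · refine sum_congr rfl fun y hy => sum_congr ?_ fun _ _ => rfl
    ext a
    simp only [mem_filter, mem_univ, true_and, iff_and_self]
    rintro rfl
    simpa using hy
  · intro x hx
    simpa using hx

lemma IsPMF.pushforward [Fintype β] {p : α → ℝ} (hp : IsPMF p) (f : α → β) :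
    IsPMF (pushforward f p) :=
  ⟨pushforward_nonneg f hp.1, by rw [sum_pushforward, hp.2]⟩

end Pushforward

lemma mul_log_sub_mul_log_le {p q c : ℝ} (hp : 0 ≤ p) (hpq : p ≤ q) (hc : 0 < c) :
    p * log q - p * log p ≤ q / c - p + p * log c := by
  rcases hp.eq_or_lt with rfl | hp
  · simpa using div_nonneg (by linarith) hc.le
  have hq : 0 < q := hp.trans_le hpq
  have key := mul_le_mul_of_nonneg_left
    (log_le_sub_one_of_pos (show 0 < q / (c * p) by positivity)) hp.le
  rw [log_div hq.ne' (by positivity), log_mul hc.ne' hp.ne'] at key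
  have : p * (q / (c * p) - 1) = q / c - p := by field_simp
  linarith

lemma sum_comp_le_mul_sum {α β : Type*} [Fintype α] [Fintype β] (f : α → β) {g : β → ℝ}
    (hg : ∀ y, 0 ≤ g y) {c : ℕ} (hc : ∀ y, #(univ.filter (f · = y)) ≤ c) :
    ∑ x, g (f x) ≤ c * ∑ y, g y := by
  rw [← sum_fiberwise univ f (fun x => g (f x)), mul_sum]
  refine sum_le_sum fun y _ => ?_
  rw [sum_congr rfl fun x hx => by rw [(mem_filter.1 hx).2], sum_const, nsmul_eq_mul]
  exact mul_le_mul_of_nonneg_right (by exact_mod_cast hc y) (hg y)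

section Entropy

variable {α β : Type*} [Fintype α] [Fintype β]

lemma entropy_nonneg {p : α → ℝ} (hp : IsPMF p) : 0 ≤ entropy p := by
  rw [entropy, neg_nonneg]
  refine sum_nonpos fun x _ => mul_log_nonpos (hp.1 x) ?_
  rw [← hp.2]
  exact single_le_sum (fun i _ => hp.1 i) (mem_univ x)

lemma entropy_pushforward_le (f : α → β) {p : α → ℝ} (hp : ∀ x, 0 ≤ p x) :
    entropy (pushforward f p) ≤ entropy p := by
  rw [entropy, entropy, neg_le_neg_iff, sum_pushforward_mul f p (fun y => log _)]
  refine sum_le_sum fun x _ => ?_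
  rcases (hp x).eq_or_lt with h | h
  · simp [← h]
  · exact mul_le_mul_of_nonneg_left (log_le_log h (le_pushforward_apply f hp x)) h.le

lemma entropy_le_entropy_pushforward_add_log (f : α → β) {p : α → ℝ} (hp : IsPMF p) {c : ℕ}
    (hc0 : 0 < c) (hc : ∀ y, #(univ.filter (f · = y)) ≤ c) :
    entropy p ≤ entropy (pushforward f p) + log c := by
  set q := pushforward f p
  have hc0' : (0 : ℝ) < c := by exact_mod_cast hc0
  have hq : ∑ x, q (f x) ≤ c := by
    simpa [q, sum_pushforward, hp.2] using
      sum_comp_le_mul_sum f (pushforward_nonneg f hp.1) hc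
  have key : ∑ x, (p x * log (q (f x)) - p x * log (p x))
      ≤ ∑ x, (q (f x) / c - p x + p x * log c) :=
    sum_le_sum fun x _ => mul_log_sub_mul_log_le (hp.1 x) (le_pushforward_apply f hp.1 x) hc0'
  rw [sum_sub_distrib, sum_add_distrib, sum_sub_distrib, ← sum_div, ← sum_mul, hp.2] at key
  have : (∑ x, q (f x)) / c ≤ 1 := (div_le_one hc0').2 hq
  simp only [entropy, q, sum_pushforward_mul f p (fun y => log _)]
  linarith

lemma entropy_le_log_card {p : α → ℝ} (hp : IsPMF p) : entropy p ≤ log (Fintype.card α) := by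
  have hα : 0 < Fintype.card α := by
    by_contra h
    have : IsEmpty α := Fintype.card_eq_zero_iff.1 (by omega)
    simpa using hp.2
  have h := entropy_le_entropy_pushforward_add_log (fun _ => ()) hp hα
    fun _ => by convert card_filter_le univ _; rfl
  have h0 : entropy (pushforward (fun _ : α => ()) p) = 0 := by
    simp [entropy, pushforward, hp.2]
  linarith

end Entropy

section Margin

variable {d N : ℕ} {μ : (Fin N → Fin d) → ℝ}

lemma margin_eq_pushforward (μ : (Fin N → Fin d) → ℝ) (S : Finset (Fin N)) :
    margin μ S = pushforward (fun x (i : S) => x i) μ := by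
  funext y
  simp only [margin, pushforward, funext_iff]

lemma margin_eq_pushforward_margin (μ : (Fin N → Fin d) → ℝ) {T S : Finset (Fin N)}
    (h : T ⊆ S) : margin μ T = pushforward (fun z (i : T) => z ⟨i, h i.2⟩) (margin μ S) := by
  rw [margin_eq_pushforward, margin_eq_pushforward, pushforward_comp]
  rfl

lemma IsPMF.margin (hμ : IsPMF μ) (S : Finset (Fin N)) : IsPMF (margin μ S) := by
  rw [margin_eq_pushforward]
  exact hμ.pushforward _

lemma entropy_margin_le_entropy (hμ : IsPMF μ) (S : Finset (Fin N)) :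
    entropy (margin μ S) ≤ entropy μ := by
  rw [margin_eq_pushforward]
  exact entropy_pushforward_le _ hμ.1

lemma entropy_le_mul_log (hμ : IsPMF μ) : entropy μ ≤ N * log d := by
  simpa using entropy_le_log_card hμ

lemma entropy_margin_le_card_mul_log (hμ : IsPMF μ) (S : Finset (Fin N)) :
    entropy (margin μ S) ≤ #S * log d := by
  simpa using entropy_le_log_card (hμ.margin S)

lemma entropy_margin_insert_le (hμ : IsPMF μ) (hd : 0 < d) (a : Fin N) (T : Finset (Fin N)) :
    entropy (margin μ (insert a T)) ≤ entropy (margin μ T) + log d := by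
  have hT := subset_insert a T
  rw [margin_eq_pushforward_margin μ hT]
  refine entropy_le_entropy_pushforward_add_log _ (hμ.margin _) hd fun y => ?_
  have hinj : Set.InjOn (fun z : {i // i ∈ insert a T} → Fin d => z ⟨a, mem_insert_self a T⟩)
      (univ.filter fun z : {i // i ∈ insert a T} → Fin d => (fun i : T => z ⟨i, hT i.2⟩) = y) := by
    intro z hz z' hz' ha
    simp only [coe_filter, mem_univ, true_and] at hz hz'
    funext i
    rcases mem_insert.1 i.2 with h | h
    · exact (congrArg z (Subtype.ext h)).trans (ha.trans (congrArg z' (Subtype.ext h)).symm)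
    · exact (congrFun hz ⟨i, h⟩).trans (congrFun hz' ⟨i, h⟩).symm
  convert card_le_card_of_injOn _ (fun _ _ => mem_univ _) hinj
  simp

end Margin

lemma sum_powersetCard_succ_sum_erase {α M : Type*} [Fintype α] [DecidableEq α]
    [AddCommMonoid M] (k : ℕ) (g : Finset α → α → M) :
    ∑ T ∈ powersetCard (k + 1) univ, ∑ i ∈ T, g (T.erase i) i
      = ∑ S ∈ powersetCard k univ, ∑ i ∈ Sᶜ, g S i := by
  rw [sum_sigma', sum_sigma']
  refine sum_bij' (fun p _ => ⟨p.1.erase p.2, p.2⟩) (fun p _ => ⟨insert p.2 p.1, p.2⟩)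
    ?_ ?_ ?_ ?_ fun _ _ => rfl
  · rintro ⟨T, i⟩ hp
    simp only [mem_sigma, mem_powersetCard_univ] at hp ⊢
    simp [card_erase_of_mem hp.2, hp.1]
  · rintro ⟨S, i⟩ hp
    simp only [mem_sigma, mem_powersetCard_univ, mem_compl] at hp ⊢
    exact ⟨by rw [card_insert_of_notMem hp.2, hp.1], mem_insert_self _ _⟩
  · rintro ⟨T, i⟩ hp
    simp only [mem_sigma] at hp
    simp [insert_erase hp.2]
  · rintro ⟨S, i⟩ hp
    simp only [mem_sigma, mem_compl] at hp
    simp [erase_insert hp.2]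

section AverageEntropy

variable {d N : ℕ} {μ : (Fin N → Fin d) → ℝ}

lemma sum_entropy_margin_powersetCard (μ : (Fin N → Fin d) → ℝ) (k : ℕ) :
    ∑ S ∈ powersetCard k univ, entropy (margin μ S) = N.choose k * avgEntropy μ k := by
  rcases le_or_gt k N with hk | hk
  · have : (N.choose k : ℝ) ≠ 0 := by exact_mod_cast (Nat.choose_pos hk).ne'
    rw [avgEntropy]
    field_simp
  · rw [Nat.choose_eq_zero_of_lt hk, powersetCard_eq_empty.2 (by simpa using hk)]
    simp

lemma avgEntropy_le_of_forall_le {k : ℕ} (hk : k ≤ N) {b : ℝ}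
    (hb : ∀ S ∈ powersetCard k univ, entropy (margin μ S) ≤ b) : avgEntropy μ k ≤ b := by
  have hC : (0 : ℝ) < N.choose k := by exact_mod_cast Nat.choose_pos hk
  have h := sum_le_card_nsmul _ _ _ hb
  rw [sum_entropy_margin_powersetCard, card_powersetCard, card_univ, Fintype.card_fin,
    nsmul_eq_mul] at h
  exact le_of_mul_le_mul_left h hC

lemma avgEntropy_le_mul_log (hμ : IsPMF μ) {k : ℕ} (hk : k ≤ N) :
    avgEntropy μ k ≤ k * log d :=
  avgEntropy_le_of_forall_le hk fun S hS => by
    simpa [mem_powersetCard_univ.1 hS] using entropy_margin_le_card_mul_log hμ S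

lemma avgEntropy_le_entropy (hμ : IsPMF μ) {k : ℕ} (hk : k ≤ N) :
    avgEntropy μ k ≤ entropy μ :=
  avgEntropy_le_of_forall_le hk fun S _ => entropy_margin_le_entropy hμ S

/-- Double counting the pairs `S ⊂ T` with `#T = #S + 1` turns the one-step bound
`H(X_T) ≤ H(X_{T \ i}) + log d` into a bound on averages. -/
lemma avgEntropy_succ_le (hμ : IsPMF μ) (hd : 0 < d) {k : ℕ} (hk : k < N) :
    avgEntropy μ (k + 1) ≤ avgEntropy μ k + log d := by
  have hpos : (0 : ℝ) < ((N - k : ℕ) : ℝ) * N.choose k := by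
    have := Nat.choose_pos hk.le
    have : 0 < N - k := by omega
    positivity
  have hchoose : ((N.choose (k + 1) : ℕ) : ℝ) * (k + 1) = ((N - k : ℕ) : ℝ) * N.choose k := by
    rw [mul_comm (((N - k : ℕ) : ℝ))]
    exact_mod_cast Nat.choose_succ_right_eq N k
  refine le_of_mul_le_mul_left ?_ hpos
  calc ((N - k : ℕ) : ℝ) * N.choose k * avgEntropy μ (k + 1)
      = ∑ T ∈ powersetCard (k + 1) univ, ∑ _i ∈ T, entropy (margin μ T) := by
        rw [← hchoose, sum_congr rfl fun T hT => by
          rw [sum_const, mem_powersetCard_univ.1 hT, nsmul_eq_mul], ← mul_sum,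
          sum_entropy_margin_powersetCard]
        push_cast
        ring
    _ ≤ ∑ T ∈ powersetCard (k + 1) univ, ∑ i ∈ T, (entropy (margin μ (T.erase i)) + log d) :=
        sum_le_sum fun T _ => sum_le_sum fun i hi => by
          have := entropy_margin_insert_le hμ hd i (T.erase i)
          rwa [insert_erase hi] at this
    _ = ∑ S ∈ powersetCard k univ, ∑ _i ∈ Sᶜ, (entropy (margin μ S) + log d) :=
        sum_powersetCard_succ_sum_erase k fun S _ => entropy (margin μ S) + log d
    _ = ((N - k : ℕ) : ℝ) * N.choose k * (avgEntropy μ k + log d) := by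
        rw [sum_congr rfl fun S hS => by
          rw [sum_const, card_compl, mem_powersetCard_univ.1 hS, Fintype.card_fin, nsmul_eq_mul],
          ← mul_sum, sum_add_distrib, sum_entropy_margin_powersetCard, sum_const,
          card_powersetCard, card_univ, Fintype.card_fin, nsmul_eq_mul]
        ring

lemma sum_entropy_margin_compl_powersetCard (μ : (Fin N → Fin d) → ℝ) {k : ℕ} (hk : k ≤ N) :
    ∑ S ∈ powersetCard k univ, entropy (margin μ Sᶜ) = N.choose k * avgEntropy μ (N - k) := by
  rw [← Nat.choose_symm hk, ← sum_entropy_margin_powersetCard]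
  refine sum_nbij' compl compl (fun S hS => ?_) (fun S hS => ?_) (fun S _ => compl_compl S)
    (fun S _ => compl_compl S) fun _ _ => rfl
  all_goals
    simp only [mem_powersetCard_univ, card_compl, Fintype.card_fin] at hS ⊢
    omega

lemma sum_avgEntropy_range (μ : (Fin N → Fin d) → ℝ) :
    ∑ k ∈ range (N + 1), avgEntropy μ k = (N + 1) * (neural μ + entropy μ) / 2 := by
  have hsplit : ∑ S : Finset (Fin N), (1 / (N.choose #S : ℝ)) * MIS μ S
      = ∑ k ∈ range (N + 1), (avgEntropy μ k + avgEntropy μ (N - k) - entropy μ) := by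
    rw [← sum_fiberwise_of_maps_to (g := card) (t := range (N + 1)) fun S _ =>
      mem_range.2 (Nat.lt_succ_of_le ((card_le_univ S).trans_eq (Fintype.card_fin N)))]
    refine sum_congr rfl fun k hk => ?_
    rw [show univ.filter (#· = k) = powersetCard k (univ : Finset (Fin N)) by ext; simp]
    have hkN : k ≤ N := Nat.lt_succ_iff.1 (mem_range.1 hk)
    have hC : (N.choose k : ℝ) ≠ 0 := by exact_mod_cast (Nat.choose_pos hkN).ne'
    rw [sum_congr rfl fun S hS => by rw [mem_powersetCard_univ.1 hS], ← mul_sum]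
    simp only [MIS, sum_sub_distrib, sum_add_distrib, sum_entropy_margin_powersetCard,
      sum_entropy_margin_compl_powersetCard μ hkN, sum_const, card_powersetCard, card_univ,
      Fintype.card_fin, nsmul_eq_mul]
    field_simp
  have hreflect : ∑ k ∈ range (N + 1), avgEntropy μ (N - k) = ∑ k ∈ range (N + 1), avgEntropy μ k :=
    sum_range_reflect (avgEntropy μ) (N + 1)
  rw [neural, hsplit, sum_sub_distrib, sum_add_distrib, hreflect, sum_const, card_range,
    nsmul_eq_mul]
  field_simp
  push_cast
  ring

end AverageEntropy

/-- The right-hand side is `∫₀ⁿ min t h dt`. -/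
lemma sum_range_min_le (n : ℕ) {h : ℝ} (hh : 0 ≤ h) :
    ∑ k ∈ range n, min (k : ℝ) h ≤ min (n : ℝ) h * n - min (n : ℝ) h ^ 2 / 2 := by
  induction n with
  | zero => simp [hh]
  | succ n ih =>
    rw [sum_range_succ]
    refine (add_le_add_left ih _).trans ?_
    push_cast
    rcases le_total ((n : ℝ) + 1) h with h1 | h1
    · rw [min_eq_left h1, min_eq_left (by linarith)]
      nlinarith
    rcases le_total (n : ℝ) h with h2 | h2
    · rw [min_eq_right h1, min_eq_left h2]
      nlinarith
    · rw [min_eq_right h1, min_eq_right h2]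
      nlinarith

/-- A sequence that drops by at most `c` per step stays above `D k - m c` on the window
`[k, k + m]`, so a large value `D k` forces a large total sum. -/
lemma le_sum_div_add_of_sub_le_succ {D : ℕ → ℝ} {c : ℝ} (hc : 0 ≤ c) {k m n : ℕ}
    (hstep : ∀ j, j + 1 < n → D j - c ≤ D (j + 1)) (hD : ∀ j < n, 0 ≤ D j) (h : k + m < n) :
    D k ≤ (∑ j ∈ range n, D j) / (m + 1) + m * c := by
  have hchain : ∀ j ≤ m, D k - j * c ≤ D (k + j) := by
    intro j hj
    induction j with
    | zero => simp
    | succ j ih =>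
      have := hstep (k + j) (by omega)
      rw [← add_assoc]
      push_cast
      linarith [ih (by omega)]
  have hwindow : (m + 1) * (D k - m * c) ≤ ∑ j ∈ range (m + 1), D (k + j) := by
    calc (m + 1) * (D k - m * c) = ∑ _j ∈ range (m + 1), (D k - m * c) := by
          rw [sum_const, card_range, nsmul_eq_mul]
          push_cast
          ring
      _ ≤ ∑ j ∈ range (m + 1), D (k + j) := sum_le_sum fun j hj => by
          have hj : j ≤ m := Nat.lt_succ_iff.1 (mem_range.1 hj)
          have : (j : ℝ) * c ≤ m * c := by gcongr
          linarith [hchain j hj]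
  have hsub : ∑ j ∈ range (m + 1), D (k + j) ≤ ∑ j ∈ range n, D j := by
    have := sum_Ico_eq_sum_range D k (k + (m + 1))
    rw [Nat.add_sub_cancel_left] at this
    rw [← this]
    refine sum_le_sum_of_subset_of_nonneg (fun j hj => ?_) fun j hj _ => hD j (mem_range.1 hj)
    simp only [mem_Ico, mem_range] at hj ⊢
    omega
  rw [div_add' _ _ _ (by positivity), le_div_iff₀ (by positivity)]
  linarith

section Deficit

variable {d N : ℕ} {μ : (Fin N → Fin d) → ℝ}

noncomputable def entropyDeficit (μ : (Fin N → Fin d) → ℝ) (k : ℕ) : ℝ :=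
  min (k * log d) (entropy μ) - avgEntropy μ k

lemma entropyDeficit_nonneg (hμ : IsPMF μ) {k : ℕ} (hk : k ≤ N) : 0 ≤ entropyDeficit μ k :=
  sub_nonneg.2 (le_min (avgEntropy_le_mul_log hμ hk) (avgEntropy_le_entropy hμ hk))

lemma entropyDeficit_sub_le_succ (hμ : IsPMF μ) (hd : 0 < d) {k : ℕ} (hk : k < N) :
    entropyDeficit μ k - log d ≤ entropyDeficit μ (k + 1) := by
  have hmin : min (k * log d) (entropy μ) ≤ min ((k + 1 : ℕ) * log d) (entropy μ) :=
    min_le_min_right _ (mul_le_mul_of_nonneg_right (by simp) (log_natCast_nonneg d))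
  have := avgEntropy_succ_le hμ hd hk
  simp only [entropyDeficit]
  linarith

/-- The profile sum `∑ₖ avgEntropy μ k` is fixed by the neural complexity, while
`∑ₖ min (k log d) H(X)` is at most the area under `t ↦ min (t log d) H(X)`. -/
lemma sum_entropyDeficit_le (hμ : IsPMF μ) (hd : 1 < d) :
    ∑ k ∈ range (N + 1), entropyDeficit μ k
      ≤ (N + 1) * (entropy μ - neural μ) / 2 - entropy μ ^ 2 / (2 * log d) := by
  have hlog : 0 < log d := log_pos (by exact_mod_cast hd)
  set h := entropy μ / log d
  have hh : 0 ≤ h := div_nonneg (entropy_nonneg hμ) hlog.le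
  have hhN : h ≤ N + 1 := by
    rw [div_le_iff₀ hlog]
    nlinarith [entropy_le_mul_log hμ]
  have hmin : ∑ k ∈ range (N + 1), min ((k : ℕ) * log d) (entropy μ)
      = log d * ∑ k ∈ range (N + 1), min (k : ℝ) h := by
    rw [mul_sum]
    refine sum_congr rfl fun k _ => ?_
    rw [mul_min_of_nonneg _ _ hlog.le, mul_div_cancel₀ _ hlog.ne', mul_comm]
  have hsum := mul_le_mul_of_nonneg_left (sum_range_min_le (N + 1) hh) hlog.le
  rw [Nat.cast_add_one, min_eq_right hhN] at hsum
  simp only [entropyDeficit, sum_sub_distrib, hmin, sum_avgEntropy_range]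
  have : log d * (h * (N + 1) - h ^ 2 / 2) = (N + 1) * entropy μ - entropy μ ^ 2 / (2 * log d) := by
    simp only [h]
    field_simp
  linarith

lemma entropyDeficit_le_sum_div_add (hμ : IsPMF μ) (hd : 0 < d) {k m : ℕ} (h : k + m ≤ N) :
    entropyDeficit μ k ≤ (∑ j ∈ range (N + 1), entropyDeficit μ j) / (m + 1) + m * log d :=
  le_sum_div_add_of_sub_le_succ (log_natCast_nonneg d)
    (fun j hj => entropyDeficit_sub_le_succ hμ hd (by omega))
    (fun j hj => entropyDeficit_nonneg hμ (Nat.lt_succ_iff.1 hj)) (by omega)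

lemma entropyDeficit_floor_div_le (hμ : IsPMF μ) (hd : 1 < d) (hN : 0 < N) {y β : ℝ}
    (hy0 : 0 ≤ y) (hβ : 0 < β) (hβy : β ≤ 1 - y) :
    entropyDeficit μ ⌊y * N⌋₊ / (N * log d)
      ≤ (∑ j ∈ range (N + 1), entropyDeficit μ j) / (N ^ 2 * log d) / β + β := by
  have hlog : 0 < log d := log_pos (by exact_mod_cast hd)
  have hN : (0 : ℝ) < N := by exact_mod_cast hN
  have hS : 0 ≤ ∑ j ∈ range (N + 1), entropyDeficit μ j :=
    sum_nonneg fun j hj => entropyDeficit_nonneg hμ (Nat.lt_succ_iff.1 (mem_range.1 hj))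
  have hwindow : ⌊y * N⌋₊ + ⌊β * N⌋₊ ≤ N := by
    have : (⌊y * N⌋₊ : ℝ) ≤ y * N := Nat.floor_le (by positivity)
    have : (⌊β * N⌋₊ : ℝ) ≤ β * N := Nat.floor_le (by positivity)
    have : ((⌊y * N⌋₊ + ⌊β * N⌋₊ : ℕ) : ℝ) ≤ N := by push_cast; nlinarith
    exact_mod_cast this
  rw [div_le_iff₀ (by positivity)]
  calc entropyDeficit μ ⌊y * N⌋₊
      ≤ (∑ j ∈ range (N + 1), entropyDeficit μ j) / (⌊β * N⌋₊ + 1) + ⌊β * N⌋₊ * log d :=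
        entropyDeficit_le_sum_div_add hμ (by omega) hwindow
    _ ≤ (∑ j ∈ range (N + 1), entropyDeficit μ j) / (β * N) + β * N * log d := by
        gcongr
        · exact (Nat.lt_floor_add_one _).le
        · exact Nat.floor_le (by positivity)
    _ = ((∑ j ∈ range (N + 1), entropyDeficit μ j) / (N ^ 2 * log d) / β + β) * (N * log d) := by
        field_simp

end Deficit

section Asymptotics

variable {d : ℕ} {X : (N : ℕ) → (Fin N → Fin d) → ℝ} {x y : ℝ}

lemma tendsto_sum_entropyDeficit_div (hd : 1 < d) (hpmf : ∀ N, IsPMF (X N))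
    (hent : Tendsto (fun N : ℕ => entropy (X N) / (N * log d)) atTop (𝓝 x))
    (hmax : Tendsto (fun N : ℕ => neural (X N) / (N * log d)) atTop (𝓝 (x * (1 - x)))) :
    Tendsto (fun N : ℕ => (∑ k ∈ range (N + 1), entropyDeficit (X N) k) / (N ^ 2 * log d))
      atTop (𝓝 0) := by
  have hlog : 0 < log d := log_pos (by exact_mod_cast hd)
  have hupper := (((tendsto_const_nhds (x := (1 : ℝ))).add
    tendsto_one_div_atTop_nhds_zero_nat).mul (hent.sub hmax)).div_const 2 |>.sub
    ((hent.pow 2).div_const 2)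
  rw [show (1 + 0) * (x - x * (1 - x)) / 2 - x ^ 2 / 2 = 0 by ring] at hupper
  refine tendsto_of_tendsto_of_tendsto_of_le_of_le' tendsto_const_nhds hupper
    (Eventually.of_forall fun N => div_nonneg
      (sum_nonneg fun k hk => entropyDeficit_nonneg (hpmf N) (Nat.lt_succ_iff.1 (mem_range.1 hk)))
      (by positivity))
    ((eventually_gt_atTop 0).mono fun N hN => ?_)
  have hN : (0 : ℝ) < N := by exact_mod_cast hN
  refine (div_le_div_of_nonneg_right (sum_entropyDeficit_le (hpmf N) hd) (by positivity)).trans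
    (le_of_eq ?_)
  field_simp

lemma tendsto_entropyDeficit_floor_div (hd : 1 < d) (hpmf : ∀ N, IsPMF (X N))
    (hent : Tendsto (fun N : ℕ => entropy (X N) / (N * log d)) atTop (𝓝 x))
    (hmax : Tendsto (fun N : ℕ => neural (X N) / (N * log d)) atTop (𝓝 (x * (1 - x))))
    (hy0 : 0 ≤ y) (hy1 : y < 1) :
    Tendsto (fun N : ℕ => entropyDeficit (X N) ⌊y * N⌋₊ / (N * log d)) atTop (𝓝 0) := by
  refine tendsto_order.2 ⟨fun a ha => (eventually_ge_atTop 0).mono fun N _ => ?_, fun γ hγ => ?_⟩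
  · refine ha.trans_le (div_nonneg (entropyDeficit_nonneg (hpmf N) ?_) (by positivity))
    exact Nat.floor_le_of_le (by nlinarith [(Nat.cast_nonneg N : (0 : ℝ) ≤ N)])
  set β := min (γ / 2) (1 - y)
  have hβ : 0 < β := lt_min (by linarith) (by linarith)
  filter_upwards [(tendsto_sum_entropyDeficit_div hd hpmf hent hmax).eventually
    (gt_mem_nhds (show 0 < β * γ / 2 by positivity)), eventually_gt_atTop 0] with N hsum hN
  refine (entropyDeficit_floor_div_le (hpmf N) hd hN hy0 hβ (min_le_right _ _)).trans_lt ?_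
  have hsum : _ / β < γ / 2 := (div_lt_iff₀ hβ).2 (hsum.trans_eq (by ring))
  linarith [min_le_left (γ / 2) (1 - y)]

lemma tendsto_sub_avgEntropy_floor_div_of_le (hd : 1 < d) (hpmf : ∀ N, IsPMF (X N))
    (hent : Tendsto (fun N : ℕ => entropy (X N) / (N * log d)) atTop (𝓝 x))
    (hmax : Tendsto (fun N : ℕ => neural (X N) / (N * log d)) atTop (𝓝 (x * (1 - x))))
    (hy0 : 0 < y) (hy1 : y < 1) (hyx : y ≤ x) :
    Tendsto (fun N : ℕ => (⌊y * N⌋₊ * log d - avgEntropy (X N) ⌊y * N⌋₊) / (⌊y * N⌋₊ * log d))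
      atTop (𝓝 0) := by
  have hlog : 0 < log d := log_pos (by exact_mod_cast hd)
  have hgap : Tendsto (fun N : ℕ => (⌊y * N⌋₊ * log d - min (⌊y * N⌋₊ * log d) (entropy (X N)))
      / (N * log d)) atTop (𝓝 0) := by
    have hmax0 : Tendsto (fun N : ℕ => max 0 (y - entropy (X N) / (N * log d))) atTop (𝓝 0) := by
      simpa [max_eq_left (sub_nonpos.2 hyx)] using
        (tendsto_const_nhds (x := (0 : ℝ))).max ((tendsto_const_nhds (x := y)).sub hent)
    refine tendsto_of_tendsto_of_tendsto_of_le_of_le' tendsto_const_nhds hmax0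
      (Eventually.of_forall fun N => div_nonneg (sub_nonneg.2 (min_le_left _ _)) (by positivity))
      ((eventually_gt_atTop 0).mono fun N hN => ?_)
    have hN : (0 : ℝ) < N := by exact_mod_cast hN
    rcases min_cases (⌊y * N⌋₊ * log d) (entropy (X N)) with ⟨h, -⟩ | ⟨h, -⟩ <;> rw [h]
    · simp
    · refine le_max_of_le_right ?_
      calc (⌊y * N⌋₊ * log d - entropy (X N)) / (N * log d)
          ≤ (y * N * log d - entropy (X N)) / (N * log d) := by
            gcongr
            exact Nat.floor_le (by positivity)
        _ = y - entropy (X N) / (N * log d) := by field_simp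
  have hratio : Tendsto (fun N : ℕ => (N : ℝ) / ⌊y * N⌋₊) atTop (𝓝 y⁻¹) := by
    simpa using ((tendsto_nat_floor_mul_div_atTop hy0.le).comp
      tendsto_natCast_atTop_atTop).inv₀ hy0.ne'
  have hlim := ((tendsto_entropyDeficit_floor_div hd hpmf hent hmax hy0.le hy1).add hgap).mul
    hratio
  rw [zero_add, zero_mul] at hlim
  refine hlim.congr' ((eventually_gt_atTop 0).mono fun N hN => ?_)
  simp only [entropyDeficit]
  field_simp
  ring

lemma tendsto_entropy_sub_avgEntropy_floor_div_of_ge (hd : 1 < d) (hpmf : ∀ N, IsPMF (X N))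
    (hent : Tendsto (fun N : ℕ => entropy (X N) / (N * log d)) atTop (𝓝 x))
    (hmax : Tendsto (fun N : ℕ => neural (X N) / (N * log d)) atTop (𝓝 (x * (1 - x))))
    (hy0 : 0 ≤ y) (hy1 : y < 1) (hxy : x ≤ y) :
    Tendsto (fun N : ℕ => (entropy (X N) - avgEntropy (X N) ⌊y * N⌋₊) / (N * log d))
      atTop (𝓝 0) := by
  have hlog : 0 < log d := log_pos (by exact_mod_cast hd)
  have hgap : Tendsto (fun N : ℕ => (entropy (X N) - min (⌊y * N⌋₊ * log d) (entropy (X N)))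
      / (N * log d)) atTop (𝓝 0) := by
    have hmax0 : Tendsto (fun N : ℕ => max 0 (entropy (X N) / (N * log d) - y + 1 / N))
        atTop (𝓝 0) := by
      simpa [max_eq_left (sub_nonpos.2 hxy)] using
        (tendsto_const_nhds (x := (0 : ℝ))).max
        ((hent.sub_const y).add tendsto_one_div_atTop_nhds_zero_nat)
    refine tendsto_of_tendsto_of_tendsto_of_le_of_le' tendsto_const_nhds hmax0
      (Eventually.of_forall fun N => div_nonneg (sub_nonneg.2 (min_le_right _ _)) (by positivity))
      ((eventually_gt_atTop 0).mono fun N hN => ?_)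
    have hN : (0 : ℝ) < N := by exact_mod_cast hN
    rcases min_cases (⌊y * N⌋₊ * log d) (entropy (X N)) with ⟨h, -⟩ | ⟨h, -⟩ <;> rw [h]
    · refine le_max_of_le_right ?_
      have hfloor : y * N < ⌊y * N⌋₊ + 1 := Nat.lt_floor_add_one _
      rw [div_le_iff₀ (by positivity)]
      have : (entropy (X N) / (N * log d) - y + 1 / N) * (N * log d)
          = entropy (X N) - (y * N - 1) * log d := by
        field_simp
        ring
      rw [this]
      nlinarith
    · simp
  have hlim := (tendsto_entropyDeficit_floor_div hd hpmf hent hmax hy0 hy1).add hgap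
  rw [zero_add] at hlim
  refine hlim.congr fun N => ?_
  simp only [entropyDeficit]
  ring

end Asymptotics

lemma card_filter_mul_le_sum {ι : Type*} {s : Finset ι} {f : ι → ℝ} {p : ι → Prop}
    [DecidablePred p] {t : ℝ} (hf : ∀ i ∈ s, 0 ≤ f i) (hp : ∀ i ∈ s, p i → t ≤ f i) :
    #(s.filter p) * t ≤ ∑ i ∈ s, f i := by
  calc #(s.filter p) * t ≤ ∑ i ∈ s.filter p, f i := by
        simpa using card_nsmul_le_sum _ _ _ fun i hi => hp i (mem_filter.1 hi).1 (mem_filter.1 hi).2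
    _ ≤ ∑ i ∈ s, f i := sum_le_sum_of_subset_of_nonneg (filter_subset _ _) fun i hi _ => hf i hi

section Counting

variable {d N : ℕ} {μ : (Fin N → Fin d) → ℝ}

lemma card_filter_entropy_margin_not_near_max_le (hμ : IsPMF μ) (hd : 1 < d) {k : ℕ}
    (hk : 0 < k) {ε : ℝ} (hε : 0 < ε)
    (h : (k * log d - avgEntropy μ k) / (k * log d) ≤ ε ^ 2) :
    (#((powersetCard k univ).filter fun S => ¬ (1 - ε ≤ entropy (margin μ S) / (#S * log d) ∧
        entropy (margin μ S) / (#S * log d) ≤ 1)) : ℝ) ≤ ε * N.choose k := by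
  have hkl : (0 : ℝ) < k * log d := mul_pos (by exact_mod_cast hk) (log_pos (by exact_mod_cast hd))
  have hmax : ∀ S ∈ powersetCard k univ, entropy (margin μ S) ≤ k * log d := fun S hS => by
    simpa [mem_powersetCard_univ.1 hS] using entropy_margin_le_card_mul_log hμ S
  refine le_of_mul_le_mul_right ((card_filter_mul_le_sum (t := ε * (k * log d))
    (f := fun S => k * log d - entropy (margin μ S)) (fun S hS => sub_nonneg.2 (hmax S hS))
    fun S hS hnot => ?_).trans ?_) (mul_pos hε hkl)
  · rw [mem_powersetCard_univ.1 hS, div_le_one hkl, le_div_iff₀ hkl] at hnot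
    linarith [not_le.1 (not_and'.1 hnot (hmax S hS))]
  rw [sum_sub_distrib, sum_const, card_powersetCard, card_univ, Fintype.card_fin, nsmul_eq_mul,
    sum_entropy_margin_powersetCard, ← mul_sub]
  rw [div_le_iff₀ hkl] at h
  calc (N.choose k : ℝ) * (k * log d - avgEntropy μ k) ≤ N.choose k * (ε ^ 2 * (k * log d)) := by
        gcongr
    _ = ε * N.choose k * (ε * (k * log d)) := by ring

lemma card_filter_entropy_sub_margin_not_small_le (hμ : IsPMF μ) (hd : 1 < d) (hN : 0 < N)
    {k : ℕ} {ε : ℝ} (hε : 0 < ε)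
    (h : (entropy μ - avgEntropy μ k) / (N * log d) ≤ ε ^ 2) :
    (#((powersetCard k univ).filter fun S =>
        ¬ (0 ≤ (entropy μ - entropy (margin μ S)) / (N * log d) ∧
          (entropy μ - entropy (margin μ S)) / (N * log d) ≤ ε)) : ℝ) ≤ ε * N.choose k := by
  have hNl : (0 : ℝ) < N * log d := mul_pos (by exact_mod_cast hN) (log_pos (by exact_mod_cast hd))
  refine le_of_mul_le_mul_right ((card_filter_mul_le_sum (t := ε * (N * log d))
    (f := fun S => entropy μ - entropy (margin μ S))
    (fun S _ => sub_nonneg.2 (entropy_margin_le_entropy hμ S)) fun S _ hnot => ?_).trans ?_)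
    (mul_pos hε hNl)
  · rw [div_le_iff₀ hNl, le_div_iff₀ hNl] at hnot
    linarith [not_le.1 (not_and.1 hnot (by linarith [entropy_margin_le_entropy hμ S]))]
  rw [sum_sub_distrib, sum_const, card_powersetCard, card_univ, Fintype.card_fin, nsmul_eq_mul,
    sum_entropy_margin_powersetCard, ← mul_sub]
  rw [div_le_iff₀ hNl] at h
  calc (N.choose k : ℝ) * (entropy μ - avgEntropy μ k) ≤ N.choose k * (ε ^ 2 * (N * log d)) := by
        gcongr
    _ = ε * N.choose k * (ε * (N * log d)) := by ring

end Counting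

theorem stmt4_general (d : ℕ) (hd : 2 ≤ d) (x : ℝ)
    (X : (N : ℕ) → (Fin N → Fin d) → ℝ) (hpmf : ∀ N, IsPMF (X N))
    (hent : Tendsto (fun N : ℕ => entropy (X N) / (N * Real.log d)) atTop (nhds x))
    (hmax : Tendsto (fun N : ℕ => neural (X N) / (N * Real.log d)) atTop
      (nhds (x * (1 - x))))
    (y : ℝ) (hy : y ∈ Set.Ioo (0:ℝ) 1) (ε : ℝ) (hε : 0 < ε) :
    ∃ N₀ : ℕ, ∀ N, N₀ ≤ N →
      (y ≤ x →
        ((((Finset.powersetCard ⌊y * N⌋₊ (Finset.univ : Finset (Fin N))).filter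
            (fun S => ¬ (1 - ε ≤ entropy (margin (X N) S) / (S.card * Real.log d) ∧
              entropy (margin (X N) S) / (S.card * Real.log d) ≤ 1))).card : ℝ)
          ≤ ε * (N.choose ⌊y * N⌋₊ : ℝ))) ∧
      (x ≤ y →
        ((((Finset.powersetCard ⌊y * N⌋₊ (Finset.univ : Finset (Fin N))).filter
            (fun S => ¬ (0 ≤ (entropy (X N) - entropy (margin (X N) S)) / (N * Real.log d) ∧
              (entropy (X N) - entropy (margin (X N) S)) / (N * Real.log d) ≤ ε))).card : ℝ)
          ≤ ε * (N.choose ⌊y * N⌋₊ : ℝ))) := by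
  obtain ⟨hy0, hy1⟩ := hy
  have hε2 : Set.Iic (ε ^ 2) ∈ 𝓝 (0 : ℝ) := Iic_mem_nhds (by positivity)
  have hfloor : ∀ᶠ N : ℕ in atTop, 0 < ⌊y * N⌋₊ :=
    ((tendsto_natCast_atTop_atTop.const_mul_atTop hy0).eventually_ge_atTop 1).mono
      fun N hN => Nat.floor_pos.2 hN
  have hlow := eventually_imp_distrib_left.2 fun hyx =>
    (tendsto_sub_avgEntropy_floor_div_of_le hd hpmf hent hmax hy0 hy1 hyx).eventually hε2
  have hhigh := eventually_imp_distrib_left.2 fun hxy =>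
    (tendsto_entropy_sub_avgEntropy_floor_div_of_ge hd hpmf hent hmax hy0.le hy1 hxy).eventually hε2
  obtain ⟨N₀, hN₀⟩ :=
    eventually_atTop.1 (((hfloor.and (eventually_gt_atTop 0)).and hlow).and hhigh)
  refine ⟨N₀, fun N hN => ?_⟩
  obtain ⟨⟨⟨hk, hN⟩, hlow⟩, hhigh⟩ := hN₀ N hN
  exact ⟨fun hyx => card_filter_entropy_margin_not_near_max_le (hpmf N) hd hk hε (hlow hyx),
    fun hxy => card_filter_entropy_sub_margin_not_small_le (hpmf N) hd hN hε (hhigh hxy)⟩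

/-- threshold behavior of subsystems of an approximate `x`-maximizer for the
neural complexity: for `y ∈ (0,1)`, `k_N = ⌊yN⌋` and `ε > 0`, for `N` large all but at most
`ε·C(N,k_N)` of the subsets `S` of size `k_N` satisfy: if `y ≤ x`,
`1 − ε ≤ H(X^N_S)/(|S| log d) ≤ 1`; if `y ≥ x`, `0 ≤ H(X^N | X^N_S)/(N log d) ≤ ε`,
where `H(X^N | X^N_S) = H(X^N) − H(X^N_S)`. -/
theorem stmt4 (d : ℕ) (hd : 2 ≤ d) (x : ℝ) (hx : x ∈ Set.Icc (0:ℝ) 1)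
    (X : (N : ℕ) → (Fin N → Fin d) → ℝ) (hpmf : ∀ N, IsPMF (X N))
    (hent : Tendsto (fun N : ℕ => entropy (X N) / (N * Real.log d)) atTop (nhds x))
    (hmax : Tendsto (fun N : ℕ => neural (X N) / (N * Real.log d)) atTop
      (nhds (x * (1 - x))))
    (y : ℝ) (hy : y ∈ Set.Ioo (0:ℝ) 1) (ε : ℝ) (hε : 0 < ε) :
    ∃ N₀ : ℕ, ∀ N, N₀ ≤ N →
      (y ≤ x →
        ((((Finset.powersetCard ⌊y * N⌋₊ (Finset.univ : Finset (Fin N))).filter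
            (fun S => ¬ (1 - ε ≤ entropy (margin (X N) S) / (S.card * Real.log d) ∧
              entropy (margin (X N) S) / (S.card * Real.log d) ≤ 1))).card : ℝ)
          ≤ ε * (N.choose ⌊y * N⌋₊ : ℝ))) ∧
      (x ≤ y →
        ((((Finset.powersetCard ⌊y * N⌋₊ (Finset.univ : Finset (Fin N))).filter
            (fun S => ¬ (0 ≤ (entropy (X N) - entropy (margin (X N) S)) / (N * Real.log d) ∧
              (entropy (X N) - entropy (margin (X N) S)) / (N * Real.log d) ≤ ε))).card : ℝ)
          ≤ ε * (N.choose ⌊y * N⌋₊ : ℝ))) :=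
  stmt4_general d hd x X hpmf hent hmax y hy ε hε
end

section
/- Let I^c be a non-null intricacy with associated symmetric probability measure λ_c on [0,1]. Then: (1) i^c(x) = ∫_{[0,1]} min{x, 1−x, t, 1−t} λ_c(dt) for all x ∈ [0,1]; (2) i^c : [0,1] → [0,1] is concave and 1-Lipschitz; (3) i^c(x) = i^c(1−x) for all x ∈ [0,1]; (4) i^c achieves its maximum over [0,1] at x = 1/2, and i^c(1/2) = ∫_{[0,1]} min{t, 1−t} λ_c(dt). -/
open Filter

open MeasureTheory

/-- The coefficients `c^N_k = ∫ t^k (1−t)^{N−k} λ(dt)` of an intricacy with representing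
measure `λ`. -/
noncomputable def cNk (lam : Measure ℝ) (N k : ℕ) : ℝ :=
  ∫ t, t ^ k * (1 - t) ^ (N - k) ∂lam

/-- `lam` is the representing measure of a non-null intricacy: a probability measure carried
by `[0,1]`, invariant under `t ↦ 1 − t`, with `λ((0,1)) > 0`. -/
def IsIntricacyMeasure (lam : Measure ℝ) : Prop :=
  IsProbabilityMeasure lam ∧ lam (Set.Icc (0:ℝ) 1)ᶜ = 0 ∧
    Measure.map (fun t : ℝ => 1 - t) lam = lam ∧ 0 < lam (Set.Ioo (0:ℝ) 1)

/-- The intricacy `I^c(X) = ∑_{S ⊆ {1,…,N}} c^N_{|S|} · MI(X_S, X_{Sᶜ})` with coefficients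
represented by `lam`. -/
noncomputable def intricacy (lam : Measure ℝ) {d N : ℕ} (μ : (Fin N → Fin d) → ℝ) : ℝ :=
  ∑ S : Finset (Fin N), cNk lam N S.card * MIS μ S

/-- `i^c_N(x) = 2 ∑_{k=0}^N c^N_k C(N,k) min{k/N, x} − x`. -/
noncomputable def icN (lam : Measure ℝ) (N : ℕ) (x : ℝ) : ℝ :=
  2 * ∑ k ∈ Finset.range (N + 1),
    cNk lam N k * (N.choose k : ℝ) * min ((k : ℝ) / N) x - x

/-- `i^c(x) = 2 ∫ min{t,x} λ(dt) − x`. -/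
noncomputable def ic (lam : Measure ℝ) (x : ℝ) : ℝ :=
  2 * ∫ t, min t x ∂lam - x

/-- `‖f‖_{c,N} = ∑_{k=0}^N c^N_k C(N,k) |f(k/N)|`. -/
noncomputable def cNorm (lam : Measure ℝ) (N : ℕ) (f : ℝ → ℝ) : ℝ :=
  ∑ k ∈ Finset.range (N + 1), cNk lam N k * (N.choose k : ℝ) * |f ((k : ℝ) / N)|

/-- The topological support of a measure on `ℝ`. -/
def mSupport (lam : Measure ℝ) : Set ℝ :=
  {x | ∀ U : Set ℝ, IsOpen U → x ∈ U → lam U ≠ 0}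

/-!
Pairing `t` with `1 - t` through the symmetry of `λ_c` turns `2 ∫ min{t, x} λ_c(dt) − x` into
`∫ (min{t, x} + min{1 − t, x} − x) λ_c(dt)`, and the integrand is `min{x, 1−x, t, 1−t}`
pointwise. So `i^c` is an average of the functions `x ↦ min{tent x, c}` with `c ∈ [0, 1/2]`,
where `tent x = min{x, 1 − x}`; each of them is concave, 1-Lipschitz, invariant under
`x ↦ 1 − x` and maximal at `x = 1/2`, and these properties survive averaging.
-/

open MeasureTheory Set

section ParametricIntegral

variable {X : Type*} [MeasurableSpace X] {μ : Measure X}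

theorem ConcaveOn.integral {E : Type*} [AddCommMonoid E] [Module ℝ E] {s : Set E}
    {F : E → X → ℝ} (hs : Convex ℝ s) (hF : ∀ᵐ t ∂μ, ConcaveOn ℝ s (F · t))
    (hint : ∀ x ∈ s, Integrable (F x) μ) : ConcaveOn ℝ s fun x => ∫ t, F x t ∂μ := by
  refine ⟨hs, fun x hx y hy a b ha hb hab => ?_⟩
  simp only [smul_eq_mul]
  rw [← integral_const_mul, ← integral_const_mul,
    ← integral_add ((hint x hx).const_mul a) ((hint y hy).const_mul b)]
  exact integral_mono_ae (((hint x hx).const_mul a).add ((hint y hy).const_mul b))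
    (hint _ (hs hx hy ha hb hab)) (hF.mono fun t ht => ht.2 hx hy ha hb hab)

theorem LipschitzWith.integral {α : Type*} [PseudoMetricSpace α] [IsProbabilityMeasure μ]
    {K : NNReal} {F : α → X → ℝ} (hF : ∀ᵐ t ∂μ, LipschitzWith K (F · t))
    (hint : ∀ x, Integrable (F x) μ) : LipschitzWith K fun x => ∫ t, F x t ∂μ := by
  refine LipschitzWith.of_dist_le_mul fun x y => ?_
  rw [Real.dist_eq, ← integral_sub (hint x) (hint y)]
  calc |∫ t, (F x t - F y t) ∂μ|
      ≤ ∫ t, |F x t - F y t| ∂μ := abs_integral_le_integral_abs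
    _ ≤ ∫ _, K * dist x y ∂μ :=
      integral_mono_ae ((hint x).sub (hint y)).abs (integrable_const _)
        (hF.mono fun t ht => by simpa only [Real.dist_eq] using ht.dist_le_mul x y)
    _ = K * dist x y := by simp

theorem Continuous.integrable_of_ae_mem_compact [TopologicalSpace X] [T2Space X]
    [OpensMeasurableSpace X] [IsFiniteMeasure μ] {K : Set X} (hK : IsCompact K)
    (hμ : ∀ᵐ t ∂μ, t ∈ K) {f : X → ℝ} (hf : Continuous f) : Integrable f μ := by
  have := hf.continuousOn.integrableOn_compact (μ := μ) hK
  rwa [IntegrableOn, Measure.restrict_eq_self_of_ae_mem hμ] at this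

end ParametricIntegral

def tent (x : ℝ) : ℝ := min x (1 - x)

theorem tent_one_sub (x : ℝ) : tent (1 - x) = tent x := by
  rw [tent, tent, sub_sub_cancel, min_comm]

theorem tent_le_half (x : ℝ) : tent x ≤ 1 / 2 := by
  unfold tent
  linarith [min_le_left x (1 - x), min_le_right x (1 - x)]

theorem tent_half : tent (1 / 2) = 1 / 2 := by
  norm_num [tent]

theorem tent_nonneg {x : ℝ} (hx : x ∈ Icc (0 : ℝ) 1) : 0 ≤ tent x :=
  le_min hx.1 (sub_nonneg.2 hx.2)

theorem concaveOn_tent : ConcaveOn ℝ univ tent :=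
  (concaveOn_id convex_univ).inf ((concaveOn_const 1 convex_univ).sub (convexOn_id convex_univ))

theorem lipschitzWith_tent : LipschitzWith 1 tent := by
  unfold tent
  simpa using LipschitzWith.id.min ((LipschitzWith.const (1 : ℝ)).sub LipschitzWith.id)

theorem min_add_min_one_sub_sub_self (t x : ℝ) :
    min t x + min (1 - t) x - x = min (tent x) (tent t) := by
  simp only [tent, min_def]
  split_ifs <;> linarith

theorem ic_eq_integral_min_tent {lam : Measure ℝ} [IsProbabilityMeasure lam]
    (hsupp : ∀ᵐ t ∂lam, t ∈ Icc (0 : ℝ) 1) (hsym : lam.map (fun t => 1 - t) = lam)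
    (x : ℝ) :
    ic lam x = ∫ t, min (tent x) (tent t) ∂lam := by
  have hint {g : ℝ → ℝ} (hg : Continuous g) : Integrable g lam :=
    hg.integrable_of_ae_mem_compact isCompact_Icc hsupp
  have hint_left : Integrable (fun t => min t x) lam := hint (by fun_prop)
  have hint_right : Integrable (fun t => min (1 - t) x) lam := hint (by fun_prop)
  have hflip : ∫ t, min (1 - t) x ∂lam = ∫ t, min t x ∂lam := by
    conv_rhs => rw [← hsym]
    exact ((measurableEmbedding_subLeft (1 : ℝ)).integral_map fun t => min t x).symm
  calc ic lam x = (∫ t, min t x ∂lam) + (∫ t, min (1 - t) x ∂lam) - x := by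
        rw [ic, hflip]; ring
    _ = ∫ t, (min t x + min (1 - t) x - x) ∂lam := by
        rw [integral_sub (f := fun t => min t x + min (1 - t) x) (hint_left.add hint_right)
          (integrable_const x), integral_add hint_left hint_right, integral_const]
        simp
    _ = ∫ t, min (tent x) (tent t) ∂lam := by
        simp_rw [min_add_min_one_sub_sub_self]

/-- for a non-null intricacy with representing measure `λ_c`:
(1) `i^c(x) = ∫ min{x, 1−x, t, 1−t} λ_c(dt)` on `[0,1]`;
(2) `i^c : [0,1] → [0,1]` is concave and 1-Lipschitz;
(3) `i^c(x) = i^c(1−x)`;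
(4) `i^c` is maximal at `x = 1/2` with `i^c(1/2) = ∫ min{t, 1−t} λ_c(dt)`. -/
theorem stmt9 (lam : Measure ℝ) (hlam : IsIntricacyMeasure lam) :
    (∀ x ∈ Set.Icc (0:ℝ) 1,
      ic lam x = ∫ t, min (min x (1 - x)) (min t (1 - t)) ∂lam) ∧
    (ConcaveOn ℝ (Set.Icc (0:ℝ) 1) (ic lam) ∧
      LipschitzOnWith 1 (ic lam) (Set.Icc (0:ℝ) 1) ∧
      Set.MapsTo (ic lam) (Set.Icc (0:ℝ) 1) (Set.Icc (0:ℝ) 1)) ∧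
    (∀ x ∈ Set.Icc (0:ℝ) 1, ic lam x = ic lam (1 - x)) ∧
    ((∀ x ∈ Set.Icc (0:ℝ) 1, ic lam x ≤ ic lam (1/2)) ∧
      ic lam (1/2) = ∫ t, min t (1 - t) ∂lam) := by
  obtain ⟨hprob, hc, hsym, -⟩ := hlam
  have hsupp : ∀ᵐ t ∂lam, t ∈ Icc (0 : ℝ) 1 := ae_iff.2 hc
  have hrep : ic lam = fun x => ∫ t, min (tent x) (tent t) ∂lam :=
    funext (ic_eq_integral_min_tent hsupp hsym)
  have hint (x : ℝ) : Integrable (fun t => min (tent x) (tent t)) lam :=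
    Continuous.integrable_of_ae_mem_compact isCompact_Icc hsupp (by unfold tent; fun_prop)
  refine ⟨fun x _ => congrFun hrep x, ⟨?_, ?_, fun x hx => ?_⟩, fun x _ => ?_,
    fun x _ => ?_, ?_⟩ <;> rw [hrep]
  · refine (ConcaveOn.integral convex_univ (ae_of_all _ fun t => ?_) fun x _ => hint x).subset
      (subset_univ _) (convex_Icc 0 1)
    exact concaveOn_tent.inf (concaveOn_const _ convex_univ)
  · exact (LipschitzWith.integral (ae_of_all _ fun t => lipschitzWith_tent.min_const _)
      hint).lipschitzOnWith
  · refine ⟨integral_nonneg_of_ae <| hsupp.mono fun t ht =>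
      le_min (tent_nonneg hx) (tent_nonneg ht), ?_⟩
    calc ∫ t, min (tent x) (tent t) ∂lam ≤ ∫ _, (1 : ℝ) ∂lam :=
          integral_mono (hint x) (integrable_const 1)
            fun t => (min_le_left _ _).trans ((tent_le_half x).trans (by norm_num))
      _ = 1 := by simp
  · simp only [tent_one_sub]
  · exact integral_mono (hint x) (hint _)
      fun t => min_le_min_right _ ((tent_le_half x).trans tent_half.ge)
  · simp only [tent_half, min_eq_right (tent_le_half _)]
    rfl
end
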